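/- Let B be an extriangulated category with enough projectives and enough injectives, let A ↣ B ↠ C be a conflation (with inflation a: A → B and deflation b: B → C), and let X ∈ B with chosen syzygies Ω^i X. Then for every i > 0 there is a long exact sequence of abelian groups ... → E(Ω^i X, A) → E(Ω^i X, B) → E(Ω^i X, C) → E(Ω^{i+1} X, A) → E(Ω^{i+1} X, B) → ..., where the maps E(Ω^i X, A) → E(Ω^i X, B) and E(Ω^i X, B) → E(Ω^i X, C) are induced by a and b. -/

import Mathlib

namespace ExtriHearts

open CategoryTheory CategoryTheory.Limits Opposite

attribute [local instance] CategoryTheory.Limits.hasBinaryBiproducts_of_finite_biproducts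

universe v u v₂ u₂

section IdealQuotient

variable {D : Type u₂} [Category.{v₂} D] [Preadditive D]

/-- The subgroup of morphisms `X ⟶ Y` generated by those factoring through an object of `W`. -/
def wIdeal (W : Set D) (X Y : D) : AddSubgroup (X ⟶ Y) :=
  AddSubgroup.closure {f : X ⟶ Y | ∃ Z ∈ W, ∃ p : X ⟶ Z, ∃ q : Z ⟶ Y, f = p ≫ q}

/-- The hom relation on `D` identifying morphisms whose difference lies in the ideal
generated by morphisms factoring through an object of `W`.  (For an additively closed
subcategory `W` this is the usual relation "`f - g` factors through an object of `W`".) -/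
def wRel (W : Set D) : HomRel D := fun {X Y} f g => f - g ∈ wIdeal W X Y

lemma comp_left_mem_wIdeal (W : Set D) {X Y Z : D} (f : X ⟶ Y) {g : Y ⟶ Z}
    (hg : g ∈ wIdeal W Y Z) : f ≫ g ∈ wIdeal W X Z := by
  have hle : wIdeal W Y Z ≤ (wIdeal W X Z).comap (Preadditive.leftComp Z f) := by
    rw [wIdeal, AddSubgroup.closure_le]
    rintro g ⟨Z₀, hZ₀, p, q, rfl⟩
    exact AddSubgroup.subset_closure ⟨Z₀, hZ₀, f ≫ p, q, by
      simp [Preadditive.leftComp]⟩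
  simpa [Preadditive.leftComp] using hle hg

lemma comp_right_mem_wIdeal (W : Set D) {X Y Z : D} {f : X ⟶ Y} (g : Y ⟶ Z)
    (hf : f ∈ wIdeal W X Y) : f ≫ g ∈ wIdeal W X Z := by
  have hle : wIdeal W X Y ≤ (wIdeal W X Z).comap (Preadditive.rightComp X g) := by
    rw [wIdeal, AddSubgroup.closure_le]
    rintro f ⟨Z₀, hZ₀, p, q, rfl⟩
    exact AddSubgroup.subset_closure ⟨Z₀, hZ₀, p, q ≫ g, by
      simp [Preadditive.rightComp]⟩
  simpa [Preadditive.rightComp] using hle hf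

instance wRel_congruence (W : Set D) : Congruence (wRel W) where
  equivalence :=
    { refl := fun f => by
        show f - f ∈ wIdeal W _ _
        simp only [sub_self]
        exact zero_mem _
      symm := fun {f g} h => by
        have h' : f - g ∈ wIdeal W _ _ := h
        show g - f ∈ wIdeal W _ _
        simpa only [neg_sub] using neg_mem h'
      trans := fun {f g h} h₁ h₂ => by
        have h₁' : f - g ∈ wIdeal W _ _ := h₁
        have h₂' : g - h ∈ wIdeal W _ _ := h₂
        show f - h ∈ wIdeal W _ _
        simpa only [sub_add_sub_cancel] using add_mem h₁' h₂' }
  comp_left := fun {X Y Z} f {g g'} h => by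
    have h' : g - g' ∈ wIdeal W _ _ := h
    show f ≫ g - f ≫ g' ∈ wIdeal W _ _
    simpa only [← Preadditive.comp_sub] using comp_left_mem_wIdeal W f h'
  comp_right := fun {X Y Z} {f f'} g h => by
    have h' : f - f' ∈ wIdeal W _ _ := h
    show f ≫ g - f' ≫ g ∈ wIdeal W _ _
    simpa only [← Preadditive.sub_comp] using comp_right_mem_wIdeal W g h'

/-- The quotient of a preadditive category by (the ideal generated by) the morphisms factoring
through a class of objects `W`. -/
abbrev QuotCat (W : Set D) := CategoryTheory.Quotient (wRel W)

/-- The canonical quotient functor. -/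
abbrev toQuot (W : Set D) : D ⥤ QuotCat W := Quotient.functor _

instance quotCatPreadditive (W : Set D) : Preadditive (QuotCat W) :=
  Quotient.preadditive _ (fun X Y f₁ f₂ g₁ g₂ h₁ h₂ => by
    have h₁' : f₁ - f₂ ∈ wIdeal W X Y := h₁
    have h₂' : g₁ - g₂ ∈ wIdeal W X Y := h₂
    show f₁ + g₁ - (f₂ + g₂) ∈ wIdeal W X Y
    have heq : f₁ + g₁ - (f₂ + g₂) = f₁ - f₂ + (g₁ - g₂) := by abel
    rw [heq]
    exact add_mem h₁' h₂')

end IdealQuotient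

section ExtCat

/-- The data of an additive `Ab`-valued bifunctor together with a realization predicate:
`realize δ x y` means that the 3-term sequence `A --x--> X --y--> C` realizes the
`E`-extension `δ ∈ E(C,A)`, i.e. belongs to the equivalence class `s(δ)`. -/
structure PreExtStruct (B : Type u) [Category.{v} B] [Preadditive B] where
  /-- The additive bifunctor `E : Bᵒᵖ × B → Ab`. -/
  E : Bᵒᵖ ⥤ B ⥤ AddCommGrpCat.{v}

namespace PreExtStruct

variable {B : Type u} [Category.{v} B] [Preadditive B]

/-- The abelian group `E(C,A)` of `E`-extensions of `C` by `A`. -/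
abbrev Ext (σ : PreExtStruct B) (C A : B) : AddCommGrpCat.{v} := (σ.E.obj (op C)).obj A

/-- `a_* δ`, the pushforward of an `E`-extension along `a : A ⟶ A'`. -/
def push (σ : PreExtStruct B) {C A A' : B} (a : A ⟶ A') (δ : σ.Ext C A) : σ.Ext C A' :=
  (σ.E.obj (op C)).map a δ

/-- `c^* δ`, the pullback of an `E`-extension along `c : C' ⟶ C`. -/
def pull (σ : PreExtStruct B) {C' C A : B} (c : C' ⟶ C) (δ : σ.Ext C A) : σ.Ext C' A :=
  (σ.E.map c.op).app A δ

/-- The direct sum `δ ⊕ δ'` of two `E`-extensions, i.e. the element of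
`E(C ⊞ C', A ⊞ A')` corresponding to `(δ, 0, 0, δ')`. -/
noncomputable def sumExt (σ : PreExtStruct B) [HasBinaryBiproducts B] {C C' A A' : B}
    (δ : σ.Ext C A) (δ' : σ.Ext C' A') : σ.Ext (C ⊞ C') (A ⊞ A') :=
  σ.push biprod.inl (σ.pull biprod.fst δ) + σ.push biprod.inr (σ.pull biprod.snd δ')

end PreExtStruct

/-- An *extriangulated category* structure `(E, s)` on an additive category `B`, consisting of
an additive bifunctor `E : Bᵒᵖ × B → Ab` and an additive realization `s` of `E` (encoded by the
predicate `realize`), subject to the axioms (ET1), (ET2), (ET3), (ET3)ᵒᵖ, (ET4), (ET4)ᵒᵖ of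
Nakaoka–Palu. -/
structure ExtStruct (B : Type u) [Category.{v} B] [Preadditive B] [HasFiniteBiproducts B]
    extends PreExtStruct B where
  /-- (ET1) `E` is additive in the second variable. -/
  additive_fst : ∀ Cop : Bᵒᵖ, (E.obj Cop).Additive
  /-- (ET1) `E` is additive in the first variable. -/
  additive_snd : ∀ A : B, (E.flip.obj A).Additive
  /-- `realize δ x y` means the sequence `A --x--> X --y--> C` realizes `δ`, i.e. it belongs to
  the equivalence class `s(δ)`. -/
  realize : ∀ ⦃A C : B⦄, toPreExtStruct.Ext C A → ∀ ⦃X : B⦄, (A ⟶ X) → (X ⟶ C) → Prop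
  /-- Every `E`-extension is realized by some sequence. -/
  realize_ex : ∀ ⦃A C : B⦄ (δ : toPreExtStruct.Ext C A),
      ∃ (X : B) (x : A ⟶ X) (y : X ⟶ C), realize δ x y
  /-- `s(δ)` is closed under the equivalence of sequences. -/
  realize_iso : ∀ ⦃A C X X' : B⦄ (δ : toPreExtStruct.Ext C A) (x : A ⟶ X) (y : X ⟶ C)
      (b : X ≅ X'), realize δ x y → realize δ (x ≫ b.hom) (b.inv ≫ y)
  /-- Any two realizations of `δ` are equivalent sequences. -/
  realize_unique : ∀ ⦃A C X X' : B⦄ (δ : toPreExtStruct.Ext C A) (x : A ⟶ X) (y : X ⟶ C)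
      (x' : A ⟶ X') (y' : X' ⟶ C), realize δ x y → realize δ x' y' →
      ∃ b : X ≅ X', x ≫ b.hom = x' ∧ b.hom ≫ y' = y
  /-- (ET2)(∗) Any morphism of `E`-extensions is realized by a morphism of sequences. -/
  realize_map : ∀ ⦃A C A' C' X X' : B⦄ (δ : toPreExtStruct.Ext C A) (δ' : toPreExtStruct.Ext C' A')
      (x : A ⟶ X) (y : X ⟶ C) (x' : A' ⟶ X') (y' : X' ⟶ C') (a : A ⟶ A') (c : C ⟶ C'),
      realize δ x y → realize δ' x' y' →
      toPreExtStruct.push a δ = toPreExtStruct.pull c δ' →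
      ∃ b : X ⟶ X', x ≫ b = a ≫ x' ∧ y ≫ c = b ≫ y'
  /-- (ET2)(i) The split extension is realized by the split sequence. -/
  realize_zero : ∀ A C : B,
      realize (0 : toPreExtStruct.Ext C A) (biprod.inl : A ⟶ A ⊞ C) (biprod.snd : A ⊞ C ⟶ C)
  /-- (ET2)(ii) Realization is additive. -/
  realize_sum : ∀ ⦃A C A' C' X X' : B⦄ (δ : toPreExtStruct.Ext C A)
      (δ' : toPreExtStruct.Ext C' A') (x : A ⟶ X) (y : X ⟶ C) (x' : A' ⟶ X') (y' : X' ⟶ C'),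
      realize δ x y → realize δ' x' y' →
      realize (toPreExtStruct.sumExt δ δ') (biprod.map x x') (biprod.map y y')
  /-- (ET3) -/
  et3 : ∀ ⦃A C A' C' X X' : B⦄ (δ : toPreExtStruct.Ext C A) (δ' : toPreExtStruct.Ext C' A')
      (x : A ⟶ X) (y : X ⟶ C) (x' : A' ⟶ X') (y' : X' ⟶ C'),
      realize δ x y → realize δ' x' y' → ∀ (a : A ⟶ A') (b : X ⟶ X'), x ≫ b = a ≫ x' →
      ∃ c : C ⟶ C', toPreExtStruct.push a δ = toPreExtStruct.pull c δ' ∧ y ≫ c = b ≫ y'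
  /-- (ET3)ᵒᵖ -/
  et3op : ∀ ⦃A C A' C' X X' : B⦄ (δ : toPreExtStruct.Ext C A) (δ' : toPreExtStruct.Ext C' A')
      (x : A ⟶ X) (y : X ⟶ C) (x' : A' ⟶ X') (y' : X' ⟶ C'),
      realize δ x y → realize δ' x' y' → ∀ (b : X ⟶ X') (c : C ⟶ C'), y ≫ c = b ≫ y' →
      ∃ a : A ⟶ A', toPreExtStruct.push a δ = toPreExtStruct.pull c δ' ∧ x ≫ b = a ≫ x'
  /-- (ET4) -/
  et4 : ∀ ⦃A B₀ D C F : B⦄ (δ : toPreExtStruct.Ext D A) (f : A ⟶ B₀) (f' : B₀ ⟶ D)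
      (δ' : toPreExtStruct.Ext F B₀) (g : B₀ ⟶ C) (g' : C ⟶ F),
      realize δ f f' → realize δ' g g' →
      ∃ (E₀ : B) (d : D ⟶ E₀) (e : E₀ ⟶ F) (h' : C ⟶ E₀) (δ'' : toPreExtStruct.Ext E₀ A),
        g ≫ h' = f' ≫ d ∧ h' ≫ e = g' ∧
        realize δ'' (f ≫ g) h' ∧ realize (toPreExtStruct.push f' δ') d e ∧
        toPreExtStruct.pull d δ'' = δ ∧ toPreExtStruct.push f δ'' = toPreExtStruct.pull e δ'
  /-- (ET4)ᵒᵖ -/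
  et4op : ∀ ⦃F C B₀ D A : B⦄ (δ' : toPreExtStruct.Ext B₀ F) (s : F ⟶ C) (t : C ⟶ B₀)
      (δ : toPreExtStruct.Ext A D) (u : D ⟶ B₀) (v : B₀ ⟶ A),
      realize δ' s t → realize δ u v →
      ∃ (E₀ : B) (e : F ⟶ E₀) (d : E₀ ⟶ D) (m : E₀ ⟶ C) (δ'' : toPreExtStruct.Ext A E₀),
        m ≫ t = d ≫ u ∧ e ≫ m = s ∧
        realize δ'' m (t ≫ v) ∧ realize (toPreExtStruct.pull u δ') e d ∧
        toPreExtStruct.push d δ'' = δ ∧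
        toPreExtStruct.pull v δ'' = toPreExtStruct.push e δ'

namespace ExtStruct

variable {B : Type u} [Category.{v} B] [Preadditive B] [HasFiniteBiproducts B] (σ : ExtStruct B)

/-- A sequence `A --x--> X --y--> C` is a conflation if it realizes some `E`-extension. -/
def Conflation {A X C : B} (x : A ⟶ X) (y : X ⟶ C) : Prop :=
  ∃ δ : σ.Ext C A, σ.realize δ x y

/-- `Cone(D₁, D₂)`: objects `X` admitting a conflation `D₁ ↣ D₂ ↠ X`. -/
def Cone (D₁ D₂ : Set B) : Set B :=
  {X | ∃ (A Y : B) (f : A ⟶ Y) (g : Y ⟶ X), A ∈ D₁ ∧ Y ∈ D₂ ∧ σ.Conflation f g}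

/-- `CoCone(D₁, D₂)`: objects `X` admitting a conflation `X ↣ D₁ ↠ D₂`. -/
def CoCone (D₁ D₂ : Set B) : Set B :=
  {X | ∃ (Y C : B) (f : X ⟶ Y) (g : Y ⟶ C), Y ∈ D₁ ∧ C ∈ D₂ ∧ σ.Conflation f g}

/-- `D₁ ∗ D₂`: objects `X` admitting a conflation `D₁ ↣ X ↠ D₂`. -/
def star (D₁ D₂ : Set B) : Set B :=
  {X | ∃ (A C : B) (f : A ⟶ X) (g : X ⟶ C), A ∈ D₁ ∧ C ∈ D₂ ∧ σ.Conflation f g}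

/-- `add(D₁ ∗ D₂)`: direct summands of objects of `D₁ ∗ D₂`. -/
def addStar (D₁ D₂ : Set B) : Set B :=
  {X | ∃ Y ∈ σ.star D₁ D₂, ∃ (s : X ⟶ Y) (r : Y ⟶ X), s ≫ r = 𝟙 X}

/-- An object `P` is projective if `E(P, −) = 0`. -/
def IsProj (P : B) : Prop := ∀ (A : B) (δ : σ.Ext P A), δ = 0

/-- An object `I` is injective if `E(−, I) = 0`. -/
def IsInj (I : B) : Prop := ∀ (C : B) (δ : σ.Ext C I), δ = 0

/-- The class of projective objects. -/
def projs : Set B := {P | σ.IsProj P}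

/-- `B` has enough projectives: every object admits a deflation from a projective. -/
def EnoughProj : Prop :=
  ∀ X : B, ∃ (P K : B) (i : K ⟶ P) (p : P ⟶ X), σ.IsProj P ∧ σ.Conflation i p

/-- `B` has enough injectives: every object admits an inflation into an injective. -/
def EnoughInj : Prop :=
  ∀ X : B, ∃ (I C : B) (i : X ⟶ I) (p : I ⟶ C), σ.IsInj I ∧ σ.Conflation i p

end ExtStruct

/-- A full additive subcategory (given as a class of objects), closed under isomorphisms and
direct summands. -/
structure AddClosed {B : Type u} [Category.{v} B] [Preadditive B] [HasFiniteBiproducts B]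
    (U : Set B) : Prop where
  zero_mem : ∀ Z : B, IsZero Z → Z ∈ U
  biprod_mem : ∀ X Y : B, X ∈ U → Y ∈ U → (X ⊞ Y) ∈ U
  summand_mem : ∀ X Y : B, Y ∈ U → ∀ (s : X ⟶ Y) (r : Y ⟶ X), s ≫ r = 𝟙 X → X ∈ U

namespace ExtStruct

variable {B : Type u} [Category.{v} B] [Preadditive B] [HasFiniteBiproducts B] (σ : ExtStruct B)

/-- A (complete) cotorsion pair `(U, V)` on an extriangulated category. -/
structure IsCotorsionPair (U V : Set B) : Prop where
  addU : AddClosed U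
  addV : AddClosed V
  ext_vanish : ∀ ⦃X : B⦄, X ∈ U → ∀ ⦃Y : B⦄, Y ∈ V → ∀ δ : σ.Ext X Y, δ = 0
  resolve : ∀ X : B, ∃ (V₀ U₀ : B) (f : V₀ ⟶ U₀) (g : U₀ ⟶ X),
      V₀ ∈ V ∧ U₀ ∈ U ∧ σ.Conflation f g
  coresolve : ∀ X : B, ∃ (V₀ U₀ : B) (f : X ⟶ V₀) (g : V₀ ⟶ U₀),
      V₀ ∈ V ∧ U₀ ∈ U ∧ σ.Conflation f g

/-- A twin cotorsion pair `((S,T), (U,V))`. -/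
structure IsTwinCotorsionPair (S T U V : Set B) : Prop where
  fst : σ.IsCotorsionPair S T
  snd : σ.IsCotorsionPair U V
  ext_SV : ∀ ⦃X : B⦄, X ∈ S → ∀ ⦃Y : B⦄, Y ∈ V → ∀ δ : σ.Ext X Y, δ = 0

section Twin

variable (S T U V : Set B)

/-- `B⁺ = Cone(V, W)` for the core `W = T ∩ U` of a twin cotorsion pair. -/
def tPos : Set B := σ.Cone V (T ∩ U)

/-- `B⁻ = CoCone(W, S)` for the core `W = T ∩ U` of a twin cotorsion pair. -/
def tNeg : Set B := σ.CoCone (T ∩ U) S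

/-- The class of objects of the heart `H = B⁺ ∩ B⁻` of a twin cotorsion pair. -/
def tHeartSet : Set B := σ.tPos T U V ∩ σ.tNeg S T U

/-- The heart `H/W` of a twin cotorsion pair, as a full subcategory of the quotient
category `B/W`. -/
abbrev THeart := ObjectProperty.FullSubcategory (fun X : QuotCat (T ∩ U : Set B) => X.as ∈ σ.tHeartSet S T U V)


/-- A *reflection sequence* for `B₀`: a conflation `B₀ ↣ Z ↠ S₀` with `Z ∈ B⁺`, `S₀ ∈ S`,
such that `z^* : E(Z, V₀) → E(B₀, V₀)` is surjective for every `V₀ ∈ V`. -/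
def IsReflectionSeq {B₀ Z S₀ : B} (z : B₀ ⟶ Z) (w : Z ⟶ S₀) : Prop :=
  Z ∈ σ.tPos T U V ∧ S₀ ∈ S ∧ σ.Conflation z w ∧
    ∀ ⦃V₀ : B⦄, V₀ ∈ V → Function.Surjective (fun δ : σ.Ext Z V₀ => σ.pull z δ)

/-- A *coreflection sequence* for `B₀`: a conflation `V₀ ↣ X ↠ B₀` with `X ∈ B⁻`, `V₀ ∈ V`,
such that `x_* : E(S₀, X) → E(S₀, B₀)` is surjective for every `S₀ ∈ S`. -/
def IsCoreflectionSeq {V₀ X B₀ : B} (v : V₀ ⟶ X) (x : X ⟶ B₀) : Prop :=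
  X ∈ σ.tNeg S T U ∧ V₀ ∈ V ∧ σ.Conflation v x ∧
    ∀ ⦃S₀ : B⦄, S₀ ∈ S → Function.Surjective (fun δ : σ.Ext S₀ X => σ.push x δ)

end Twin

section Single

variable (U V : Set B)

/-- `B⁺` for a single cotorsion pair `(U,V)`, with core `W = U ∩ V`. -/
def sPos : Set B := σ.Cone V (U ∩ V)

/-- `B⁻` for a single cotorsion pair `(U,V)`, with core `W = U ∩ V`. -/
def sNeg : Set B := σ.CoCone (U ∩ V) U

/-- The class of objects of the heart of a single cotorsion pair. -/
def sHeartSet : Set B := σ.sPos U V ∩ σ.sNeg U V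

/-- The heart `H/W` of a cotorsion pair `(U,V)`, a full subcategory of `B/W`, `W = U ∩ V`. -/
abbrev SHeart := ObjectProperty.FullSubcategory (fun X : QuotCat (U ∩ V : Set B) => X.as ∈ σ.sHeartSet U V)

/-- The inclusion of the heart into the quotient category `B/W`. -/
abbrev sHeartIncl : σ.SHeart U V ⥤ QuotCat (U ∩ V : Set B) := ObjectProperty.ι _

/-- The kernel `K = add(U ∗ V)` of a cotorsion pair. -/
def kernelSet : Set B := σ.addStar U V

/-- The coheart `C = ⊥₁K` of a cotorsion pair. -/
def coheart : Set B := {X | ∀ ⦃K : B⦄, K ∈ σ.kernelSet U V → ∀ δ : σ.Ext X K, δ = 0}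


/-- An object of the heart determined by an object of `B` lying in `B⁺ ∩ B⁻`. -/
def sHeartObj {X : B} (hX : X ∈ σ.sHeartSet U V) : σ.SHeart U V :=
  ⟨(toQuot (U ∩ V : Set B)).obj X, hX⟩

/-- The image in the heart of a morphism of `B` between objects of `B⁺ ∩ B⁻`. -/
def sHeartHom {X Y : B} (hX : X ∈ σ.sHeartSet U V) (hY : Y ∈ σ.sHeartSet U V) (f : X ⟶ Y) :
    σ.sHeartObj U V hX ⟶ σ.sHeartObj U V hY :=
  ObjectProperty.homMk ((toQuot (U ∩ V : Set B)).map f)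

end Single

end ExtStruct

end ExtCat

section More

variable {B : Type u} [Category.{v} B] [Preadditive B] [HasFiniteBiproducts B]

namespace ExtStruct

variable (σ : ExtStruct B)

/-- `Ω D₀ = CoCone(P, D₀)`, the syzygy class of a class of objects `D₀`. -/
def omegaSet (D₀ : Set B) : Set B := σ.CoCone σ.projs D₀

/-- A choice of iterated syzygies of `X`: `Z 0 = X` and for each `i` there is a conflation
`Z (i+1) ↣ P ↠ Z i` with `P` projective. -/
def SyzygyChain (X : B) (Z : ℕ → B) : Prop :=
  Z 0 = X ∧ ∀ i : ℕ, ∃ (P : B) (f : Z (i + 1) ⟶ P) (g : P ⟶ Z i),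
    σ.IsProj P ∧ σ.Conflation f g

/-- A choice of iterated cosyzygies of `Y`: `Z 0 = Y` and for each `i` there is a conflation
`Z i ↣ I ↠ Z (i+1)` with `I` injective. -/
def CosyzygyChain (Y : B) (Z : ℕ → B) : Prop :=
  Z 0 = Y ∧ ∀ i : ℕ, ∃ (I : B) (f : Z i ⟶ I) (g : I ⟶ Z (i + 1)),
    σ.IsInj I ∧ σ.Conflation f g

/-- Vanishing of the higher extension group `E^{i+1}(X, Y) = E(X, Σ^i Y)`, expressed via
cosyzygy chains.  (`hExtVanish σ X Y 0` is the vanishing of `E(X,Y)` itself.) -/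
def hExtVanish (X Y : B) (i : ℕ) : Prop :=
  ∀ Z : ℕ → B, σ.CosyzygyChain Y Z → ∀ δ : σ.Ext X (Z i), δ = 0

/-- `Σ^j D₀`: the class of `j`-th cosyzygies of objects of `D₀`. -/
def sigmaSet (j : ℕ) (D₀ : Set B) : Set B :=
  {X | ∃ Y ∈ D₀, ∃ Z : ℕ → B, σ.CosyzygyChain Y Z ∧ Z j = X}

/-- An `n`-cluster tilting subcategory of an extriangulated category:
it is functorially finite, and `X ∈ M` iff `E^i(X, M) = 0` for `1 ≤ i ≤ n - 1`,
iff `E^i(M, X) = 0` for `1 ≤ i ≤ n - 1`. -/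
structure IsNClusterTilting (n : ℕ) (M : Set B) : Prop where
  contravariantly_finite : ∀ X : B, ∃ M₀ ∈ M, ∃ f : M₀ ⟶ X,
      ∀ M₁ ∈ M, ∀ g : M₁ ⟶ X, ∃ h : M₁ ⟶ M₀, h ≫ f = g
  covariantly_finite : ∀ X : B, ∃ M₀ ∈ M, ∃ f : X ⟶ M₀,
      ∀ M₁ ∈ M, ∀ g : X ⟶ M₁, ∃ h : M₀ ⟶ M₁, f ≫ h = g
  mem_iff_vanish_left : ∀ X : B,
      X ∈ M ↔ ∀ i : ℕ, i ≤ n - 2 → ∀ Y ∈ M, σ.hExtVanish X Y i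
  mem_iff_vanish_right : ∀ X : B,
      X ∈ M ↔ ∀ i : ℕ, i ≤ n - 2 → ∀ Y ∈ M, σ.hExtVanish Y X i

/-- `mlev σ M k` is the subcategory `M_{k+1}` of the paper: `M_1 = M` and
`M_{ℓ} = Cone(M_{ℓ-1}, M)`. -/
def mlev (M : Set B) : ℕ → Set B
  | 0 => M
  | (k + 1) => σ.Cone (mlev M k) M

end ExtStruct

section Reflectors

variable (W P N : Set B)

/-- The data of a reflection functor `σ⁺` onto the objects of `B⁺` (given by the class `P`),
i.e. a left adjoint of the inclusion of the full subcategory of `B/W` on `P` in the bijection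
formulation: composing with the unit `B → σ⁺B` gives bijections
`(σ⁺X ⟶ Y) ≃ (X ⟶ Y)` for all `Y` lying in `P`. -/
structure ReflectorData where
  σp : QuotCat W ⥤ QuotCat W
  mem : ∀ X : QuotCat W, (σp.obj X).as ∈ P
  unit : 𝟭 (QuotCat W) ⟶ σp
  bij : ∀ (X Y : QuotCat W), Y.as ∈ P →
      Function.Bijective (fun g : (σp.obj X ⟶ Y) => unit.app X ≫ g)

/-- The data of a coreflection functor `σ⁻` onto the objects of `B⁻` (given by the class `N`). -/
structure CoreflectorData where
  σm : QuotCat W ⥤ QuotCat W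
  mem : ∀ X : QuotCat W, (σm.obj X).as ∈ N
  counit : σm ⟶ 𝟭 (QuotCat W)
  bij : ∀ (X Y : QuotCat W), X.as ∈ N →
      Function.Bijective (fun g : (X ⟶ σm.obj Y) => g ≫ counit.app Y)

end Reflectors

namespace ExtStruct

variable (σ : ExtStruct B)

/-- The data of the cohomological functor `H = σ⁻ ∘ σ⁺ ∘ π : B → H` associated to a cotorsion
pair `(U, V)`: reflection and coreflection functors together with a functor `H` to the heart
which is isomorphic to `σ⁻ ∘ σ⁺ ∘ π` after composition with the inclusion of the heart. -/
structure HeartFunctorData (U V : Set B) where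
  refl : ReflectorData (B := B) (U ∩ V) (σ.sPos U V)
  corefl : CoreflectorData (B := B) (U ∩ V) (σ.sNeg U V)
  H : B ⥤ σ.SHeart U V
  iso : (H ⋙ σ.sHeartIncl U V) ≅ (toQuot (U ∩ V : Set B) ⋙ refl.σp ⋙ corefl.σm)

end ExtStruct

section Mod

variable (D : Type u₂) [Category.{v₂} D] [Preadditive D]

/-- A coherent (finitely presented) functor `Dᵒᵖ ⥤ Ab`: one admitting an exact presentation
`Hom(−,X) → Hom(−,Y) → F → 0`. -/
def IsCoherent (F : Dᵒᵖ ⥤ AddCommGrpCat.{v₂}) : Prop :=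
  ∃ (X Y : D) (f : X ⟶ Y) (η : preadditiveYoneda.obj Y ⟶ F),
    (∀ A : D, Function.Surjective (η.app (op A))) ∧
    (∀ (A : D) (g : A ⟶ Y), η.app (op A) g = 0 ↔ ∃ h : A ⟶ X, h ≫ f = g)

/-- `mod D`: the category of coherent functors `Dᵒᵖ ⥤ Ab`. -/
abbrev ModCat := ObjectProperty.FullSubcategory (fun F : Dᵒᵖ ⥤ AddCommGrpCat.{v₂} => IsCoherent D F)

end Mod

/-- The additive quotient `C/P` of the full subcategory of `B` on a class `C₀` of objects by
(the ideal of) morphisms factoring through objects satisfying `P₀`. -/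
abbrev StableCat (C₀ P₀ : Set B) :=
  QuotCat (D := ObjectProperty.FullSubcategory (fun X : B => X ∈ C₀)) {Z | Z.obj ∈ P₀}

end More

/-!
Let `δ ∈ E(C, A)` be realized by `A ↣ B₁ ↠ C` and `ρ ∈ E(M, N)` by a syzygy conflation
`N ↣ P ↠ M` with `P` projective. Since `E(P, -) = 0`, every element of `E(M, Y)` is a pushout
`h_* ρ` with `h : N ⟶ Y`, and `h_* ρ = 0` exactly when `h` factors through `N ↣ P`. The connecting
map `E(M, C) → E(N, A)` sends `h_* ρ` to `h^* δ`; it is well defined because if `h_* ρ = h'_* ρ`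
then `h - h'` factors through `P`, and `E(P, A) = 0`. Exactness at each of the three spots is
then a diagram chase with the weak (co)kernel properties of conflations.
-/

namespace ExtStruct

variable {B : Type u} [Category.{v} B] [Preadditive B] [HasFiniteBiproducts B] {σ : ExtStruct B}

section Functoriality

variable (σ)

lemma push_comp {C A A' A'' : B} (f : A ⟶ A') (g : A' ⟶ A'') (δ : σ.Ext C A) :
    σ.push (f ≫ g) δ = σ.push g (σ.push f δ) := by
  rw [PreExtStruct.push, Functor.map_comp]; rfl

lemma pull_comp {C'' C' C A : B} (f : C'' ⟶ C') (g : C' ⟶ C) (δ : σ.Ext C A) :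
    σ.pull (f ≫ g) δ = σ.pull f (σ.pull g δ) := by
  rw [PreExtStruct.pull, op_comp, Functor.map_comp]; rfl

lemma push_pull_comm {C' C A A' : B} (c : C' ⟶ C) (a : A ⟶ A') (δ : σ.Ext C A) :
    σ.push a (σ.pull c δ) = σ.pull c (σ.push a δ) :=
  congrArg (fun φ => φ δ) ((σ.E.map c.op).naturality a).symm

lemma push_id {C A : B} (δ : σ.Ext C A) : σ.push (𝟙 A) δ = δ := by
  rw [PreExtStruct.push, CategoryTheory.Functor.map_id]; rfl

lemma pull_id {C A : B} (δ : σ.Ext C A) : σ.pull (𝟙 C) δ = δ := by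
  rw [PreExtStruct.pull, op_id, CategoryTheory.Functor.map_id]; rfl

lemma push_zero {C A A' : B} (f : A ⟶ A') : σ.push f (0 : σ.Ext C A) = 0 :=
  map_zero _

lemma pull_zero {C' C A : B} (c : C' ⟶ C) : σ.pull c (0 : σ.Ext C A) = 0 :=
  map_zero _

lemma zero_push {C A A' : B} (δ : σ.Ext C A) : σ.push (0 : A ⟶ A') δ = 0 := by
  have := σ.additive_fst (op C)
  rw [PreExtStruct.push, Functor.map_zero]; rfl

lemma sub_push {C A A' : B} (f g : A ⟶ A') (δ : σ.Ext C A) :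
    σ.push (f - g) δ = σ.push f δ - σ.push g δ := by
  have := σ.additive_fst (op C)
  rw [PreExtStruct.push, Functor.map_sub]; rfl

lemma sub_pull {C' C A : B} (f g : C' ⟶ C) (δ : σ.Ext C A) :
    σ.pull (f - g) δ = σ.pull f δ - σ.pull g δ := by
  have := σ.additive_snd A
  change (σ.E.flip.obj A).map (f.op - g.op) δ = _
  rw [Functor.map_sub]; rfl

end Functoriality

section Conflation

variable {A M C : B} {x : A ⟶ M} {y : M ⟶ C} {δ : σ.Ext C A}

lemma pull_deflation_eq_zero (hr : σ.realize δ x y) : σ.pull y δ = 0 := by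
  obtain ⟨c, hc, hcomm⟩ := σ.et3 0 δ biprod.inl biprod.snd x y (σ.realize_zero A M) hr
    (𝟙 A) (biprod.desc x (𝟙 M)) (by simp)
  have hcy : c = y := by simpa using congrArg (biprod.inr ≫ ·) hcomm
  rw [← hcy, ← hc, push_zero]

lemma push_inflation_eq_zero (hr : σ.realize δ x y) : σ.push x δ = 0 := by
  obtain ⟨a, ha, hcomm⟩ := σ.et3op δ 0 x y biprod.inl biprod.snd hr (σ.realize_zero M C)
    (biprod.lift (𝟙 M) y) (𝟙 C) (by simp)
  have hax : a = x := by simpa using (congrArg (· ≫ biprod.fst) hcomm).symm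
  rw [← hax, ha, pull_zero]

lemma inflation_comp_deflation_eq_zero (hr : σ.realize δ x y) : x ≫ y = 0 := by
  obtain ⟨m, hm, hy⟩ := σ.realize_map δ 0 x y biprod.inl biprod.snd x (𝟙 C) hr
    (σ.realize_zero M C) (by rw [pull_id, push_inflation_eq_zero hr])
  calc x ≫ y = x ≫ m ≫ biprod.snd := by rw [← hy, Category.comp_id]
    _ = 0 := by rw [reassoc_of% hm]; simp

lemma exists_lift_of_comp_deflation_eq_zero (hr : σ.realize δ x y) {X : B} (w : X ⟶ M)
    (hw : w ≫ y = 0) : ∃ m : X ⟶ A, m ≫ x = w := by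
  obtain ⟨m, -, hm⟩ := σ.et3op 0 δ biprod.inl biprod.snd x y (σ.realize_zero X C) hr
    (biprod.desc w 0) 0 (by apply biprod.hom_ext' <;> simp [hw])
  exact ⟨m, by simpa using hm.symm⟩

lemma pull_eq_zero_iff (hr : σ.realize δ x y) {X : B} (t : X ⟶ C) :
    σ.pull t δ = 0 ↔ ∃ w : X ⟶ M, w ≫ y = t := by
  constructor
  · intro ht
    obtain ⟨m, -, hm⟩ := σ.realize_map 0 δ biprod.inl biprod.snd x y (𝟙 A) t
      (σ.realize_zero A X) hr (by rw [push_id, ht])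
    exact ⟨biprod.inr ≫ m, by rw [Category.assoc, ← hm]; simp⟩
  · rintro ⟨w, rfl⟩
    rw [pull_comp, pull_deflation_eq_zero hr, pull_zero]

lemma push_eq_zero_iff (hr : σ.realize δ x y) {Y : B} (h : A ⟶ Y) :
    σ.push h δ = 0 ↔ ∃ k : M ⟶ Y, x ≫ k = h := by
  constructor
  · intro hh
    obtain ⟨m, hm, -⟩ := σ.realize_map δ 0 x y biprod.inl biprod.snd h (𝟙 C) hr
      (σ.realize_zero Y C) (by rw [pull_id, hh])
    exact ⟨m ≫ biprod.fst, by rw [reassoc_of% hm]; simp⟩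
  · rintro ⟨k, rfl⟩
    rw [push_comp, push_inflation_eq_zero hr, push_zero]

lemma exists_push_eq_of_pull_deflation_eq_zero (hr : σ.realize δ x y) {Y : B}
    (ε : σ.Ext C Y) (hε : σ.pull y ε = 0) : ∃ h : A ⟶ Y, σ.push h δ = ε := by
  obtain ⟨K, u, v, hε'⟩ := σ.realize_ex ε
  obtain ⟨w, hw⟩ := (pull_eq_zero_iff hε' y).1 hε
  obtain ⟨h, hh, -⟩ := σ.et3op δ ε x y u v hr hε' w (𝟙 C) (by rw [Category.comp_id, hw])
  exact ⟨h, by rw [hh, pull_id]⟩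

lemma exists_pull_eq_of_push_inflation_eq_zero (hr : σ.realize δ x y) {X : B}
    (ω : σ.Ext X A) (hω : σ.push x ω = 0) : ∃ t : X ⟶ C, σ.pull t δ = ω := by
  obtain ⟨K, u, v, hω'⟩ := σ.realize_ex ω
  obtain ⟨k, hk⟩ := (push_eq_zero_iff hω' x).1 hω
  obtain ⟨t, ht, -⟩ := σ.et3 ω δ u v x y hω' hr (𝟙 A) k (by rw [hk, Category.id_comp])
  exact ⟨t, by rw [← ht, push_id]⟩

end Conflation

section Connecting

variable {N P M : B} {f : N ⟶ P} {g : P ⟶ M} {ρ : σ.Ext M N}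

lemma push_surjective_of_isProj (hρ : σ.realize ρ f g) (hP : σ.IsProj P) (Y : B) :
    Function.Surjective (fun h : N ⟶ Y => σ.push h ρ) :=
  fun ε => exists_push_eq_of_pull_deflation_eq_zero hρ ε (hP Y _)

lemma pull_eq_pull_of_push_eq (hρ : σ.realize ρ f g) (hP : σ.IsProj P) {A C : B}
    (δ : σ.Ext C A) {h h' : N ⟶ C} (hh' : σ.push h ρ = σ.push h' ρ) :
    σ.pull h δ = σ.pull h' δ := by
  obtain ⟨k, hk⟩ := (push_eq_zero_iff hρ (h - h')).1 (by rw [sub_push, hh', sub_self])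
  rw [← sub_eq_zero, ← sub_pull, ← hk, pull_comp, hP A (σ.pull k δ), pull_zero]

noncomputable def connecting (hρ : σ.realize ρ f g) (hP : σ.IsProj P) {A C : B}
    (δ : σ.Ext C A) : σ.Ext M C → σ.Ext N A :=
  fun ε => σ.pull (Function.surjInv (push_surjective_of_isProj hρ hP C) ε) δ

lemma connecting_push (hρ : σ.realize ρ f g) (hP : σ.IsProj P) {A C : B} (δ : σ.Ext C A)
    (h : N ⟶ C) : connecting hρ hP δ (σ.push h ρ) = σ.pull h δ :=
  pull_eq_pull_of_push_eq hρ hP δ (Function.surjInv_eq (push_surjective_of_isProj hρ hP C) _)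

variable {A B₁ C : B} {a : A ⟶ B₁} {b : B₁ ⟶ C} {δ : σ.Ext C A}

lemma exact_push_push (hδ : σ.realize δ a b) (hρ : σ.realize ρ f g) (hP : σ.IsProj P) :
    Function.Exact (fun η : σ.Ext M A => σ.push a η) (fun η : σ.Ext M B₁ => σ.push b η) := by
  intro η
  constructor
  · intro hη
    obtain ⟨h, rfl⟩ := push_surjective_of_isProj hρ hP B₁ η
    obtain ⟨k, hk⟩ := (push_eq_zero_iff hρ (h ≫ b)).1 (by rw [push_comp]; exact hη)
    obtain ⟨k', hk'⟩ := (pull_eq_zero_iff hδ k).1 (hP A _)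
    obtain ⟨m, hm⟩ := exists_lift_of_comp_deflation_eq_zero hδ (h - f ≫ k')
      (by rw [Preadditive.sub_comp, Category.assoc, hk', hk, sub_self])
    refine ⟨σ.push m ρ, ?_⟩
    dsimp only
    rw [← push_comp, hm, sub_push, push_comp, push_inflation_eq_zero hρ, push_zero, sub_zero]
  · rintro ⟨η, rfl⟩
    dsimp only
    rw [← push_comp, inflation_comp_deflation_eq_zero hδ, zero_push]

lemma exact_push_connecting (hδ : σ.realize δ a b) (hρ : σ.realize ρ f g) (hP : σ.IsProj P) :
    Function.Exact (fun η : σ.Ext M B₁ => σ.push b η) (connecting hρ hP δ) := by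
  intro ε
  obtain ⟨h, rfl⟩ := push_surjective_of_isProj hρ hP C ε
  dsimp only
  rw [connecting_push, pull_eq_zero_iff hδ]
  constructor
  · rintro ⟨w, rfl⟩
    exact ⟨σ.push w ρ, (push_comp σ w b ρ).symm⟩
  · rintro ⟨η, hη⟩
    obtain ⟨h', rfl⟩ := push_surjective_of_isProj hρ hP B₁ η
    have hh' : σ.push (h' ≫ b) ρ = σ.push h ρ := by rw [push_comp]; exact hη
    rw [← pull_eq_zero_iff hδ h, ← pull_eq_pull_of_push_eq hρ hP δ hh', pull_comp,
      pull_deflation_eq_zero hδ, pull_zero]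

lemma exact_connecting_push (hδ : σ.realize δ a b) (hρ : σ.realize ρ f g) (hP : σ.IsProj P) :
    Function.Exact (connecting hρ hP δ) (fun ω : σ.Ext N A => σ.push a ω) := by
  intro ω
  constructor
  · intro hω
    obtain ⟨t, rfl⟩ := exists_pull_eq_of_push_inflation_eq_zero hδ ω hω
    exact ⟨σ.push t ρ, connecting_push hρ hP δ t⟩
  · rintro ⟨ε, rfl⟩
    obtain ⟨h, rfl⟩ := push_surjective_of_isProj hρ hP C ε
    dsimp only
    rw [connecting_push, push_pull_comm, push_inflation_eq_zero hδ, pull_zero]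

end Connecting

end ExtStruct

theorem statement_18_general {B : Type u} [Category.{v} B] [Preadditive B] [HasFiniteBiproducts B]
    (σ : ExtStruct B)
    {A B₁ C : B} (a : A ⟶ B₁) (b : B₁ ⟶ C) (hconf : σ.Conflation a b)
    (X₀ : B) (Z : ℕ → B) (hZ : σ.SyzygyChain X₀ Z) :
    ∃ con : ∀ i : ℕ, σ.Ext (Z i) C → σ.Ext (Z (i + 1)) A,
      ∀ i : ℕ,
        (1 ≤ i → Function.Exact
          (fun δ : σ.Ext (Z i) A => σ.push a δ)
          (fun δ : σ.Ext (Z i) B₁ => σ.push b δ)) ∧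
        (1 ≤ i → Function.Exact
          (fun δ : σ.Ext (Z i) B₁ => σ.push b δ) (con i)) ∧
        Function.Exact (con i) (fun δ : σ.Ext (Z (i + 1)) A => σ.push a δ) := by
  obtain ⟨δ, hδ⟩ := hconf
  obtain ⟨-, hsyz⟩ := hZ
  choose P f g hP ρ hρ using hsyz
  exact ⟨fun i => ExtStruct.connecting (hρ i) (hP i) δ, fun i =>
    ⟨fun _ => ExtStruct.exact_push_push hδ (hρ i) (hP i),
      fun _ => ExtStruct.exact_push_connecting hδ (hρ i) (hP i),
      ExtStruct.exact_connecting_push hδ (hρ i) (hP i)⟩⟩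

/-- Proposition 5.2 / `longexact`. Let `B` be an extriangulated category
with enough projectives and enough injectives, `A --a--> B₁ --b--> C` a conflation, and
`Z` a chain of chosen syzygies `Ω^i X₀` of an object `X₀`.  Then there are connecting maps
`con i : E(Ω^i X₀, C) → E(Ω^{i+1} X₀, A)` making the sequence
`⋯ → E(Ω^i X₀, A) → E(Ω^i X₀, B₁) → E(Ω^i X₀, C) → E(Ω^{i+1} X₀, A) → ⋯` (for `i > 0`)
exact, where the unlabelled maps are induced by `a` and `b`. -/
theorem statement_18 {B : Type u} [Category.{v} B] [Preadditive B] [HasFiniteBiproducts B]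
    (σ : ExtStruct B) (hproj : σ.EnoughProj) (hinj : σ.EnoughInj)
    {A B₁ C : B} (a : A ⟶ B₁) (b : B₁ ⟶ C) (hconf : σ.Conflation a b)
    (X₀ : B) (Z : ℕ → B) (hZ : σ.SyzygyChain X₀ Z) :
    ∃ con : ∀ i : ℕ, σ.Ext (Z i) C → σ.Ext (Z (i + 1)) A,
      ∀ i : ℕ,
        (1 ≤ i → Function.Exact
          (fun δ : σ.Ext (Z i) A => σ.push a δ)
          (fun δ : σ.Ext (Z i) B₁ => σ.push b δ)) ∧
        (1 ≤ i → Function.Exact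
          (fun δ : σ.Ext (Z i) B₁ => σ.push b δ) (con i)) ∧
        Function.Exact (con i) (fun δ : σ.Ext (Z (i + 1)) A => σ.push a δ) :=
  statement_18_general σ a b hconf X₀ Z hZ

end ExtriHearts
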